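/- Let q be any quadratic polynomial on ℝ² with nonzero coefficient vector vanishing at A, B, C, P, Q. Then for every point Y ∈ ℝ²: q vanishes at Y if and only if the three points P, Y, T_P(Y) are collinear. (The conic 𝒞_P is the locus of points Y for which P, Y, and T_P(Y) are collinear.) -/

import Mathlib

noncomputable section

abbrev Pt := EuclideanSpace ℝ (Fin 2)

/-- The quadratic polynomial `a*x^2 + b*x*y + c*y^2 + d*x + e*y + f` evaluated at a point. -/
def qeval (a b c d e f : ℝ) (W : Pt) : ℝ :=
  a * (W 0)^2 + b * (W 0) * (W 1) + c * (W 1)^2 + d * (W 0) + e * (W 1) + f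

/-!
Work in barycentric coordinates `Y = x A + y B + z C` with respect to `ABC`. A conic through
`A, B, C` reads `u yz + v zx + w xy = 0`; passing through `P = (α : β : γ)` and through the
isotomcomplement `Q = (α(β+γ) : β(γ+α) : γ(α+β))` cuts the coefficients `(u, v, w)` down to a
line, spanned by the coefficients of `cevianConic`. On the other side, the signed area of
`P, Y, T_P(Y)` is the determinant of their barycentric coordinates times the area of `ABC`, and
since `T_P(Y) = x D + y E + z F`, that determinant is `cevianConic` up to the factor
`-1 / ((β+γ)(γ+α)(α+β))`.
-/

theorem exists_eq_smul_add_smul_add_smul {k V : Type*} [Field k] [AddCommGroup V] [Module k V]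
    (hV : Module.finrank k V = 2) {A B C : V} (h : AffineIndependent k ![A, B, C]) (Y : V) :
    ∃ x y z : k, x + y + z = 1 ∧ Y = x • A + y • B + z • C := by
  have : FiniteDimensional k V := Module.finite_of_finrank_eq_succ hV
  let b : AffineBasis (Fin 3) k V :=
    ⟨![A, B, C], h, by rw [h.affineSpan_eq_top_iff_card_eq_finrank_add_one, hV]; simp⟩
  have hsum := b.sum_coord_apply_eq_one Y
  have hY := b.linear_combination_coord_eq_self Y
  rw [Fin.sum_univ_three] at hsum hY
  exact ⟨_, _, _, hsum, hY.symm⟩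

theorem AffineMap.map_smul_add_smul_add_smul {k V W : Type*} [CommRing k] [AddCommGroup V]
    [Module k V] [AddCommGroup W] [Module k W] (f : V →ᵃ[k] W) {x y z : k} (h : x + y + z = 1)
    (A B C : V) :
    f (x • A + y • B + z • C) = x • f A + y • f B + z • f C := by
  have hf (v : V) : f v = f.linear v + f 0 := congrFun f.decomp v
  rw [hf, hf A, hf B, hf C, map_add, map_add, map_smul, map_smul, map_smul]
  linear_combination (norm := module) -(h • f 0)

def cross (u v : Pt) : ℝ := u 0 * v 1 - u 1 * v 0

theorem collinear_iff_cross_eq_zero (X Z W : Pt) :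
    Collinear ℝ ({X, Z, W} : Set Pt) ↔ cross (Z - X) (W - X) = 0 := by
  constructor
  · rw [collinear_iff_of_mem (Set.mem_insert X _)]
    rintro ⟨v, hv⟩
    obtain ⟨r, rfl⟩ := hv Z (by simp)
    obtain ⟨t, rfl⟩ := hv W (by simp)
    simp only [cross, vadd_eq_add, add_sub_cancel_right, PiLp.smul_apply, smul_eq_mul]
    ring
  · intro h
    by_cases hZX : Z = X
    · rw [hZX, Set.insert_idem]
      exact collinear_pair ℝ X W
    have hn : (Z 0 - X 0) ^ 2 + (Z 1 - X 1) ^ 2 ≠ 0 := by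
      contrapose! hZX
      ext i
      fin_cases i <;> simp only [Fin.zero_eta, Fin.mk_one, Fin.isValue] <;> nlinarith
    rw [collinear_iff_of_mem (Set.mem_insert X _)]
    refine ⟨Z - X, ?_⟩
    simp only [Set.mem_insert_iff, Set.mem_singleton_iff]
    rintro p (rfl | rfl | rfl)
    · exact ⟨0, by simp⟩
    · exact ⟨1, by simp⟩
    -- the coefficient of the orthogonal projection of `p - X` onto the line through `Z - X`
    refine ⟨((p 0 - X 0) * (Z 0 - X 0) + (p 1 - X 1) * (Z 1 - X 1)) /
      ((Z 0 - X 0) ^ 2 + (Z 1 - X 1) ^ 2), ?_⟩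
    simp only [cross, PiLp.sub_apply] at h
    ext i
    fin_cases i <;>
      simp only [Fin.zero_eta, Fin.mk_one, Fin.isValue, vadd_eq_add, PiLp.add_apply,
        PiLp.smul_apply, PiLp.sub_apply, smul_eq_mul] <;>
      field_simp
    · linear_combination -(Z 1 - X 1) * h
    · linear_combination (Z 0 - X 0) * h

theorem cross_sub_eq_det_mul_cross (A B C : Pt) {x₁ y₁ z₁ x₂ y₂ z₂ x₃ y₃ z₃ : ℝ}
    (h₁ : x₁ + y₁ + z₁ = 1) (h₂ : x₂ + y₂ + z₂ = 1) (h₃ : x₃ + y₃ + z₃ = 1) :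
    cross ((x₂ • A + y₂ • B + z₂ • C) - (x₁ • A + y₁ • B + z₁ • C))
        ((x₃ • A + y₃ • B + z₃ • C) - (x₁ • A + y₁ • B + z₁ • C)) =
      !![x₁, y₁, z₁; x₂, y₂, z₂; x₃, y₃, z₃].det * cross (B - A) (C - A) := by
  obtain rfl : z₁ = 1 - x₁ - y₁ := by linarith
  obtain rfl : z₂ = 1 - x₂ - y₂ := by linarith
  obtain rfl : z₃ = 1 - x₃ - y₃ := by linarith
  simp only [cross, Matrix.det_fin_three, PiLp.sub_apply, PiLp.add_apply, PiLp.smul_apply,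
    smul_eq_mul, Matrix.of_apply, Matrix.cons_val', Matrix.cons_val_zero, Matrix.cons_val_one,
    Matrix.cons_val_two, Matrix.empty_val', Matrix.cons_val_fin_one, Matrix.head_cons,
    Matrix.tail_cons, Matrix.head_fin_const]
  ring

theorem cross_ne_zero_of_affineIndependent {A B C : Pt} (h : AffineIndependent ℝ ![A, B, C]) :
    cross (B - A) (C - A) ≠ 0 := by
  rwa [Ne, ← collinear_iff_cross_eq_zero, ← affineIndependent_iff_not_collinear_set]

/-- The polarisation of the homogenisation of `qeval a b c d e f`:
`qeval a b c d e f W = qpolar a b c d e f W W`. -/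
def qpolar (a b c d e f : ℝ) (U V : Pt) : ℝ :=
  a * U 0 * V 0 + b / 2 * (U 0 * V 1 + U 1 * V 0) + c * U 1 * V 1
    + d / 2 * (U 0 + V 0) + e / 2 * (U 1 + V 1) + f

theorem qeval_smul_add_smul_add_smul (a b c d e f : ℝ) (A B C : Pt) {x y z : ℝ}
    (h : x + y + z = 1) :
    qeval a b c d e f (x • A + y • B + z • C) =
      x ^ 2 * qeval a b c d e f A + y ^ 2 * qeval a b c d e f B + z ^ 2 * qeval a b c d e f C
        + 2 * (y * z * qpolar a b c d e f B C + z * x * qpolar a b c d e f C A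
          + x * y * qpolar a b c d e f A B) := by
  obtain rfl : z = 1 - x - y := by linarith
  simp only [qeval, qpolar, PiLp.add_apply, PiLp.smul_apply, smul_eq_mul]
  ring

theorem eq_zero_of_forall_qeval_eq_zero {a b c d e f : ℝ} (h : ∀ W, qeval a b c d e f W = 0) :
    (a, b, c, d, e, f) = (0, 0, 0, 0, 0, 0) := by
  have h00 := h !₂[0, 0]
  have h10 := h !₂[1, 0]
  have h20 := h !₂[2, 0]
  have h01 := h !₂[0, 1]
  have h02 := h !₂[0, 2]
  have h11 := h !₂[1, 1]
  simp only [qeval, Fin.isValue, Matrix.cons_val_zero, Matrix.cons_val_one,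
    Matrix.cons_val_fin_one, ne_eq, OfNat.ofNat_ne_zero, not_false_eq_true, zero_pow, one_pow,
    mul_zero, mul_one, zero_mul, add_zero, zero_add] at h00 h10 h20 h01 h02 h11
  simp only [Prod.mk.injEq]
  refine ⟨?_, ?_, ?_, ?_, ?_, h00⟩ <;> linarith

theorem isotomcomplement_eq (A B C : Pt) {α β γ : ℝ} (hs : α * β + β * γ + γ * α ≠ 0) :
    (3:ℝ)⁻¹ • (A + B + C) - (2:ℝ)⁻¹ • ((α * β + β * γ + γ * α)⁻¹ •
        ((β * γ) • A + (γ * α) • B + (α * β) • C) - (3:ℝ)⁻¹ • (A + B + C)) =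
      (α * (β + γ) / (2 * (α * β + β * γ + γ * α))) • A
        + (β * (γ + α) / (2 * (α * β + β * γ + γ * α))) • B
        + (γ * (α + β) / (2 * (α * β + β * γ + γ * α))) • C := by
  have hinv := mul_inv_cancel₀ hs
  simp only [div_mul_eq_div_div_swap]
  linear_combination (norm := module) -(hinv • ((2:ℝ)⁻¹ • (A + B + C)))

/-- The conic `𝒞_P` in barycentric coordinates `(x, y, z)` with respect to `ABC`. -/
def cevianConic (α β γ x y z : ℝ) : ℝ :=
  α * (β + γ) * (γ - β) * (y * z) + β * (γ + α) * (α - γ) * (z * x)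
    + γ * (α + β) * (β - α) * (x * y)

theorem collinear_iff_cevianConic_eq_zero {A B C : Pt} (hABC : AffineIndependent ℝ ![A, B, C])
    {α β γ : ℝ} (hsum : α + β + γ = 1) (hβγ : β + γ ≠ 0) (hγα : γ + α ≠ 0) (hαβ : α + β ≠ 0)
    {x y z : ℝ} (hxyz : x + y + z = 1) :
    Collinear ℝ ({α • A + β • B + γ • C, x • A + y • B + z • C,
        x • ((β + γ)⁻¹ • (β • B + γ • C)) + y • ((γ + α)⁻¹ • (α • A + γ • C))
          + z • ((α + β)⁻¹ • (α • A + β • B))} : Set Pt) ↔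
      cevianConic α β γ x y z = 0 := by
  have hT : x • ((β + γ)⁻¹ • (β • B + γ • C)) + y • ((γ + α)⁻¹ • (α • A + γ • C))
        + z • ((α + β)⁻¹ • (α • A + β • B)) =
      (y * α / (γ + α) + z * α / (α + β)) • A + (x * β / (β + γ) + z * β / (α + β)) • B
        + (x * γ / (β + γ) + y * γ / (γ + α)) • C := by
    module
  have hTsum : (y * α / (γ + α) + z * α / (α + β)) + (x * β / (β + γ) + z * β / (α + β))
      + (x * γ / (β + γ) + y * γ / (γ + α)) = 1 := by
    field_simp
    linear_combination ((β + γ) * (γ + α) * (α + β)) * hxyz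
  have hdet : !![α, β, γ; x, y, z; y * α / (γ + α) + z * α / (α + β),
      x * β / (β + γ) + z * β / (α + β), x * γ / (β + γ) + y * γ / (γ + α)].det
        * ((β + γ) * (γ + α) * (α + β)) = - cevianConic α β γ x y z := by
    simp only [Matrix.det_fin_three, Matrix.of_apply, Matrix.cons_val', Matrix.cons_val_zero,
      Matrix.cons_val_one, Matrix.cons_val_two, Matrix.empty_val', Matrix.cons_val_fin_one,
      Matrix.head_cons, Matrix.tail_cons, Matrix.head_fin_const, cevianConic]
    field_simp
    linear_combination (norm := skip) (-cevianConic α β γ x y z) * hsum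
    unfold cevianConic
    ring
  rw [collinear_iff_cross_eq_zero, hT, cross_sub_eq_det_mul_cross A B C hsum hxyz hTsum,
    mul_eq_zero, or_iff_left (cross_ne_zero_of_affineIndependent hABC),
    ← neg_eq_zero (a := cevianConic α β γ x y z), ← hdet, mul_eq_zero,
    or_iff_left (mul_ne_zero (mul_ne_zero hβγ hγα) hαβ)]

/-- `(u, v, w)` are the coefficients of a conic `u yz + v zx + w xy = 0` through `A, B, C`;
`hP` and `hQ` say that it passes through `P` and `Q`. -/
theorem cevianConic_coeff_relations {α β γ u v w : ℝ} (hβ : β ≠ 0) (hγ : γ ≠ 0)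
    (hP : u * (β * γ) + v * (γ * α) + w * (α * β) = 0)
    (hQ : u * (β * (γ + α) * (γ * (α + β))) + v * (γ * (α + β) * (α * (β + γ)))
      + w * (α * (β + γ) * (β * (γ + α))) = 0) :
    α * (β + γ) * (γ - β) * v = β * (γ + α) * (α - γ) * u ∧
      α * (β + γ) * (γ - β) * w = γ * (α + β) * (β - α) * u := by
  constructor
  · refine mul_left_cancel₀ hγ ?_
    linear_combination (β + γ) * (γ + α) * hP - hQ
  · refine mul_left_cancel₀ hβ ?_
    linear_combination hQ - (β + γ) * (α + β) * hP

theorem qeval_eq_zero_iff_cevianConic_eq_zero {A B C : Pt}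
    (hABC : AffineIndependent ℝ ![A, B, C]) {α β γ : ℝ} (hsum : α + β + γ = 1)
    (hα : α ≠ 0) (hβ : β ≠ 0) (hγ : γ ≠ 0) (hβγ : β + γ ≠ 0) (hbc : β ≠ γ)
    (hs : α * β + β * γ + γ * α ≠ 0)
    {a b c d e f : ℝ} (hq : (a, b, c, d, e, f) ≠ (0, 0, 0, 0, 0, 0))
    (hqA : qeval a b c d e f A = 0) (hqB : qeval a b c d e f B = 0)
    (hqC : qeval a b c d e f C = 0) (hqP : qeval a b c d e f (α • A + β • B + γ • C) = 0)
    (hqQ : qeval a b c d e f ((α * (β + γ) / (2 * (α * β + β * γ + γ * α))) • A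
        + (β * (γ + α) / (2 * (α * β + β * γ + γ * α))) • B
        + (γ * (α + β) / (2 * (α * β + β * γ + γ * α))) • C) = 0)
    {x y z : ℝ} (hxyz : x + y + z = 1) :
    qeval a b c d e f (x • A + y • B + z • C) = 0 ↔ cevianConic α β γ x y z = 0 := by
  set u := qpolar a b c d e f B C
  set v := qpolar a b c d e f C A
  set w := qpolar a b c d e f A B
  have hbary {x y z : ℝ} (h : x + y + z = 1) :
      qeval a b c d e f (x • A + y • B + z • C) =
        2 * (u * (y * z) + v * (z * x) + w * (x * y)) := by
    rw [qeval_smul_add_smul_add_smul a b c d e f A B C h, hqA, hqB, hqC]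
    ring
  set s := α * β + β * γ + γ * α with hs_def
  have hQsum : α * (β + γ) / (2 * s) + β * (γ + α) / (2 * s) + γ * (α + β) / (2 * s) = 1 := by
    field_simp
    rw [hs_def]
    ring
  rw [hbary hsum] at hqP
  rw [hbary hQsum] at hqQ
  field_simp at hqQ
  obtain ⟨hv, hw⟩ := cevianConic_coeff_relations (α := α) (u := u) (v := v) (w := w) hβ hγ
    (by linear_combination hqP / 2) (by linear_combination hqQ)
  have hk : α * (β + γ) * (γ - β) ≠ 0 :=
    mul_ne_zero (mul_ne_zero hα hβγ) (sub_ne_zero.2 hbc.symm)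
  have hu : u ≠ 0 := by
    intro hu0
    rw [hu0, mul_zero] at hv hw
    refine hq (eq_zero_of_forall_qeval_eq_zero fun W => ?_)
    obtain ⟨x, y, z, h, rfl⟩ := exists_eq_smul_add_smul_add_smul finrank_euclideanSpace_fin hABC W
    rw [hbary h, hu0, (mul_eq_zero.1 hv).resolve_left hk, (mul_eq_zero.1 hw).resolve_left hk]
    ring
  have hprop : α * (β + γ) * (γ - β) * qeval a b c d e f (x • A + y • B + z • C) =
      2 * u * cevianConic α β γ x y z := by
    rw [hbary hxyz, cevianConic]
    linear_combination 2 * (z * x) * hv + 2 * (x * y) * hw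
  rw [← mul_eq_zero_iff_left hk, hprop, mul_eq_zero_iff_left (mul_ne_zero two_ne_zero hu)]

theorem stmt2_general
    (A B C : Pt) (hABC : AffineIndependent ℝ ![A, B, C])
    (α β γ : ℝ) (hsum : α + β + γ = 1)
    (hα : α ≠ 0) (hβ : β ≠ 0) (hγ : γ ≠ 0)
    (hβγ : β + γ ≠ 0) (hγα : γ + α ≠ 0) (hαβ : α + β ≠ 0)
    (hbc : β ≠ γ)
    (hs : α * β + β * γ + γ * α ≠ 0)
    (G : Pt) (hG : G = (3:ℝ)⁻¹ • (A + B + C))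
    (P : Pt) (hP : P = α • A + β • B + γ • C)
    (P' : Pt)
    (hP'' : P' = (α * β + β * γ + γ * α)⁻¹ • ((β * γ) • A + (γ * α) • B + (α * β) • C))
    (Q : Pt) (hQ : Q = G - (2:ℝ)⁻¹ • (P' - G))
    (D E F : Pt)
    (hD : D = (β + γ)⁻¹ • (β • B + γ • C))
    (hE : E = (γ + α)⁻¹ • (α • A + γ • C))
    (hF : F = (α + β)⁻¹ • (α • A + β • B))
    (TP : Pt →ᵃ[ℝ] Pt) (hTPA : TP A = D) (hTPB : TP B = E) (hTPC : TP C = F)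
    (a b c d e f : ℝ) (hq : (a, b, c, d, e, f) ≠ (0, 0, 0, 0, 0, 0))
    (hqA : qeval a b c d e f A = 0) (hqB : qeval a b c d e f B = 0)
    (hqC : qeval a b c d e f C = 0) (hqP : qeval a b c d e f P = 0)
    (hqQ : qeval a b c d e f Q = 0)
    :
    ∀ Y : Pt, qeval a b c d e f Y = 0 ↔ Collinear ℝ ({P, Y, TP Y} : Set Pt) := by
  subst hG hP hP'' hQ hD hE hF
  rw [isotomcomplement_eq A B C hs] at hqQ
  intro Y
  obtain ⟨x, y, z, hxyz, rfl⟩ := exists_eq_smul_add_smul_add_smul finrank_euclideanSpace_fin hABC Y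
  rw [qeval_eq_zero_iff_cevianConic_eq_zero hABC hsum hα hβ hγ hβγ hbc hs hq hqA hqB hqC hqP
      hqQ hxyz, TP.map_smul_add_smul_add_smul hxyz, hTPA, hTPB, hTPC,
    collinear_iff_cevianConic_eq_zero hABC hsum hβγ hγα hαβ hxyz]

theorem stmt2
    (A B C : Pt) (hABC : AffineIndependent ℝ ![A, B, C])
    (α β γ : ℝ) (hsum : α + β + γ = 1)
    (hα : α ≠ 0) (hβ : β ≠ 0) (hγ : γ ≠ 0)
    (hβγ : β + γ ≠ 0) (hγα : γ + α ≠ 0) (hαβ : α + β ≠ 0)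
    (hab : α ≠ β) (hbc : β ≠ γ) (hca : γ ≠ α)
    (hs : α * β + β * γ + γ * α ≠ 0)
    (G : Pt) (hG : G = (3:ℝ)⁻¹ • (A + B + C))
    (P : Pt) (hP : P = α • A + β • B + γ • C)
    (P' : Pt)
    (hP'' : P' = (α * β + β * γ + γ * α)⁻¹ • ((β * γ) • A + (γ * α) • B + (α * β) • C))
    (Q : Pt) (hQ : Q = G - (2:ℝ)⁻¹ • (P' - G))
    (D E F : Pt)
    (hD : D = (β + γ)⁻¹ • (β • B + γ • C))
    (hE : E = (γ + α)⁻¹ • (α • A + γ • C))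
    (hF : F = (α + β)⁻¹ • (α • A + β • B))
    (TP : Pt →ᵃ[ℝ] Pt) (hTPA : TP A = D) (hTPB : TP B = E) (hTPC : TP C = F)
    (a b c d e f : ℝ) (hq : (a, b, c, d, e, f) ≠ (0, 0, 0, 0, 0, 0))
    (hqA : qeval a b c d e f A = 0) (hqB : qeval a b c d e f B = 0)
    (hqC : qeval a b c d e f C = 0) (hqP : qeval a b c d e f P = 0)
    (hqQ : qeval a b c d e f Q = 0)
    :
    ∀ Y : Pt, qeval a b c d e f Y = 0 ↔ Collinear ℝ ({P, Y, TP Y} : Set Pt) :=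
  stmt2_general A B C hABC α β γ hsum hα hβ hγ hβγ hγα hαβ hbc hs G hG P hP P' hP'' Q hQ D E F hD hE
    hF TP hTPA hTPB hTPC a b c d e f hq hqA hqB hqC hqP hqQ
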